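/- Let (X, μ) be a σ-finite measure space and f, g ∈ L¹(X,μ) nonnegative. If there exists a sequence (S_k)_{k∈ℕ} of semi-doubly stochastic operators on L¹(X,μ) with ‖S_k f − g‖₁ → 0, then ∫_X g dμ = ∫_X f dμ and for every increasing convex function φ : [0,∞) → [0,∞) with φ(0) = 0, one has ∫_X φ∘g dμ ≤ ∫_X φ∘f dμ (the integrals of these nonnegative measurable functions taken in [0,∞]). -/

import Mathlib

open MeasureTheory Filter Topology

/-- `T : L¹(X,μ) → L¹(X,μ)` is a semi-doubly stochastic operator: it is positive,
integral preserving, and `∫_E T χ_B dμ ≤ μ(E)` for all measurable sets `E, B` of finite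
measure. -/
def IsSemiDoublyStochastic {X : Type*} [MeasurableSpace X] {μ : Measure X}
    (T : Lp ℝ 1 μ →L[ℝ] Lp ℝ 1 μ) : Prop :=
  (∀ f : Lp ℝ 1 μ, 0 ≤ᵐ[μ] (f : X → ℝ) → 0 ≤ᵐ[μ] (T f : X → ℝ)) ∧
  (∀ f : Lp ℝ 1 μ, ∫ x, (T f : X → ℝ) x ∂μ = ∫ x, (f : X → ℝ) x ∂μ) ∧
  (∀ E B : Set X, ∀ (_ : MeasurableSet E) (_ : μ E < ⊤) (hB : MeasurableSet B)
    (hBfin : μ B < ⊤),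
    ∫ x in E, (T (indicatorConstLp 1 hB hBfin.ne (1 : ℝ)) : X → ℝ) x ∂μ ≤ (μ E).toReal)

/-!
Each `Sₖ` preserves integrals and `Sₖ f → g` in `L¹`, so `∫ g = ∫ f`. For `t > 0`, a
semi-doubly stochastic `T` satisfies `∫ (T f - t)⁺ ≤ ∫ (f - t)⁺`: write `f = (f - t)⁺ + Q` with
`Q ≤ t`, and use `∫ (T f - t)⁺ = ∫_E T f - t μ E` with `E = {T f > t}`. Positivity and
conservation of integrals bound the contribution of `(f - t)⁺` by `∫ (f - t)⁺`; `Q` is an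
`L¹`-limit of functions below `t χ_B` with `μ B < ∞`, so the defining inequality bounds that of
`Q` by `t μ E`. Letting `k → ∞` gives `∫ (g - t)⁺ ≤ ∫ (f - t)⁺` for every `t > 0`. An increasing
convex `φ` with `φ 0 = 0` is the pointwise limit on `[0, ∞)` of nonnegative combinations of
hinges `(x - t)⁺`, `t > 0`, lying below `φ`, and Fatou's lemma transfers the inequality to `φ`.
-/

open Set

section HingeApproximation

variable {φ : ℝ → ℝ} {δ x : ℝ}

noncomputable def chordSlope (φ : ℝ → ℝ) (δ : ℝ) (i : ℕ) : ℝ :=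
  (φ ((i + 1) * δ) - φ (i * δ)) / δ

noncomputable def slopeIncrement (φ : ℝ → ℝ) (δ : ℝ) : ℕ → ℝ
  | 0 => chordSlope φ δ 0
  | i + 1 => chordSlope φ δ (i + 1) - chordSlope φ δ i

/-- The kinks sit one grid step to the right of the grid points: on `[(j + 1) δ, (j + 2) δ]` this
is the chord of `φ - φ 0` over `[j δ, (j + 1) δ]` translated by `δ`, which convexity keeps below
`φ - φ 0`. -/
noncomputable def hingeApprox (φ : ℝ → ℝ) (δ : ℝ) (N : ℕ) (x : ℝ) : ℝ :=
  ∑ i ∈ Finset.range N, slopeIncrement φ δ i * max (x - (i + 1) * δ) 0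

theorem continuous_hingeApprox (φ : ℝ → ℝ) (δ : ℝ) (N : ℕ) : Continuous (hingeApprox φ δ N) := by
  unfold hingeApprox
  fun_prop

theorem chordSlope_nonneg (hm : MonotoneOn φ (Ici 0)) (hδ : 0 ≤ δ) (i : ℕ) :
    0 ≤ chordSlope φ δ i := by
  have hle : φ (i * δ) ≤ φ ((i + 1) * δ) :=
    hm (by simp only [mem_Ici]; positivity) (by simp only [mem_Ici]; positivity) (by nlinarith)
  exact div_nonneg (sub_nonneg.2 hle) hδ

theorem chordSlope_le_succ (hc : ConvexOn ℝ (Ici 0) φ) (hδ : 0 < δ) (i : ℕ) :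
    chordSlope φ δ i ≤ chordSlope φ δ (i + 1) := by
  have h := hc.slope_mono_adjacent (x := i * δ) (y := (i + 1) * δ) (z := (i + 1 + 1) * δ)
    (by simp only [mem_Ici]; positivity) (by simp only [mem_Ici]; positivity)
    (by nlinarith) (by nlinarith)
  rw [show ((i : ℝ) + 1) * δ - i * δ = δ by ring,
    show ((i : ℝ) + 1 + 1) * δ - (i + 1) * δ = δ by ring] at h
  simpa only [chordSlope, Nat.cast_add, Nat.cast_one] using h

theorem slopeIncrement_nonneg (hm : MonotoneOn φ (Ici 0)) (hc : ConvexOn ℝ (Ici 0) φ)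
    (hδ : 0 < δ) : ∀ i, 0 ≤ slopeIncrement φ δ i
  | 0 => chordSlope_nonneg hm hδ.le 0
  | i + 1 => sub_nonneg.2 (chordSlope_le_succ hc hδ i)

theorem hingeApprox_succ_of_le (hδ : 0 < δ) {j : ℕ} (hx : (j + 1) * δ ≤ x) :
    hingeApprox φ δ (j + 1) x = φ (j * δ) - φ 0 + chordSlope φ δ j * (x - (j + 1) * δ) := by
  induction j with
  | zero =>
    simp [hingeApprox, slopeIncrement, max_eq_left (sub_nonneg.2 (by simpa using hx))]
  | succ j ih =>
    push_cast at hx ⊢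
    have hj : ((j : ℝ) + 1) * δ ≤ x := by nlinarith
    have hs : chordSlope φ δ j * δ = φ ((j + 1) * δ) - φ (j * δ) := div_mul_cancel₀ _ hδ.ne'
    rw [hingeApprox, Finset.sum_range_succ, ← hingeApprox, ih hj, slopeIncrement]
    push_cast
    rw [max_eq_left (by linarith)]
    linear_combination hs

theorem add_chordSlope_mul_le (hm : MonotoneOn φ (Ici 0)) (hc : ConvexOn ℝ (Ici 0) φ)
    (hδ : 0 < δ) {j : ℕ} (hx : (j + 1) * δ ≤ x) :
    φ (j * δ) + chordSlope φ δ j * (x - (j + 1) * δ) ≤ φ x := by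
  have hj : (0 : ℝ) ≤ j * δ := by positivity
  have hmono : φ (j * δ) ≤ φ ((j + 1) * δ) :=
    hm hj (by simp only [mem_Ici]; positivity) (by nlinarith)
  rcases hx.eq_or_lt with rfl | hlt
  · simpa using hmono
  have hslope :=
    hc.slope_mono_adjacent hj (hj.trans (by nlinarith) : (0 : ℝ) ≤ x) (by nlinarith) hlt
  have hd : ((j : ℝ) + 1) * δ - j * δ = δ := by ring
  rw [hd, ← chordSlope, le_div_iff₀ (by linarith)] at hslope
  linarith

theorem hingeApprox_le (hm : MonotoneOn φ (Ici 0)) (hc : ConvexOn ℝ (Ici 0) φ) (hδ : 0 < δ)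
    (N : ℕ) (hx : 0 ≤ x) : hingeApprox φ δ N x ≤ φ x - φ 0 := by
  induction N with
  | zero => simpa [hingeApprox] using hm self_mem_Ici hx hx
  | succ j ih =>
    rcases le_or_gt x ((j + 1) * δ) with hle | hlt
    · rwa [hingeApprox, Finset.sum_range_succ, max_eq_right (by linarith), mul_zero, add_zero]
    · rw [hingeApprox_succ_of_le hδ hlt.le]
      linarith [add_chordSlope_mul_le hm hc hδ hlt.le]

theorem hingeApprox_of_nonpos (hδ : 0 ≤ δ) (N : ℕ) (hx : x ≤ 0) : hingeApprox φ δ N x = 0 :=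
  Finset.sum_eq_zero fun i _ => by rw [max_eq_right (by nlinarith), mul_zero]

theorem sub_le_hingeApprox (hm : MonotoneOn φ (Ici 0)) (hc : ConvexOn ℝ (Ici 0) φ) (hδ : 0 < δ)
    {j N : ℕ} (hjN : j + 1 ≤ N) (hx : (j + 1) * δ ≤ x) : φ (j * δ) - φ 0 ≤ hingeApprox φ δ N x :=
  calc φ (j * δ) - φ 0
      ≤ φ (j * δ) - φ 0 + chordSlope φ δ j * (x - (j + 1) * δ) :=
        le_add_of_nonneg_right (mul_nonneg (chordSlope_nonneg hm hδ.le j) (by linarith))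
    _ = hingeApprox φ δ (j + 1) x := (hingeApprox_succ_of_le hδ hx).symm
    _ ≤ hingeApprox φ δ N x :=
        Finset.sum_le_sum_of_subset_of_nonneg (Finset.range_subset_range.2 hjN) fun i _ _ =>
          mul_nonneg (slopeIncrement_nonneg hm hc hδ i) (le_max_right _ _)

noncomputable def hingeApproxSeq (φ : ℝ → ℝ) (n : ℕ) : ℝ → ℝ :=
  hingeApprox φ (1 / (n + 1)) ((n + 1) ^ 2)

theorem eventually_sub_le_hingeApproxSeq (hm : MonotoneOn φ (Ici 0)) (hc : ConvexOn ℝ (Ici 0) φ)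
    {y : ℝ} (hy : 0 ≤ y) (hyx : y < x) :
    ∀ᶠ n : ℕ in atTop, φ y - φ 0 ≤ hingeApproxSeq φ n x := by
  have hmesh : ∀ᶠ n : ℕ in atTop, 2 * (1 / ((n : ℝ) + 1)) < x - y := by
    have h := tendsto_one_div_add_atTop_nhds_zero_nat.const_mul (2 : ℝ)
    rw [mul_zero] at h
    exact h.eventually_lt_const (sub_pos.2 hyx)
  filter_upwards [hmesh, eventually_ge_atTop ⌈x⌉₊] with n hn hxn
  set δ : ℝ := 1 / (n + 1) with hδ_def
  have hδ : 0 < δ := by positivity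
  have hxn : x ≤ n + 1 := (Nat.le_ceil x).trans (by exact_mod_cast hxn.trans (Nat.le_succ n))
  set j := ⌈y / δ⌉₊
  have hyj : y ≤ j * δ := (div_le_iff₀ hδ).1 (Nat.le_ceil _)
  have hjy : (j : ℝ) < y / δ + 1 := Nat.ceil_lt_add_one (by positivity)
  have hjx : ((j : ℝ) + 1) * δ ≤ x := by
    have := (lt_div_iff₀ hδ).1 (show (j : ℝ) - 1 < y / δ by linarith)
    nlinarith
  have hjN : j + 1 ≤ (n + 1) ^ 2 := by
    have h1 : ((j : ℝ) + 1) ≤ x * (n + 1) := by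
      rwa [hδ_def, mul_one_div, div_le_iff₀ (by positivity)] at hjx
    have h2 : x * (n + 1) ≤ ((n : ℝ) + 1) ^ 2 := by nlinarith
    exact_mod_cast h1.trans h2
  calc φ y - φ 0 ≤ φ (j * δ) - φ 0 := by
        gcongr; exact hm hy (hy.trans hyj) hyj
    _ ≤ hingeApprox φ δ ((n + 1) ^ 2) x := sub_le_hingeApprox hm hc hδ hjN hjx

theorem tendsto_hingeApproxSeq (hm : MonotoneOn φ (Ici 0)) (hc : ConvexOn ℝ (Ici 0) φ)
    (hx : 0 ≤ x) : Tendsto (hingeApproxSeq φ · x) atTop (𝓝 (φ x - φ 0)) := by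
  rcases hx.eq_or_lt with rfl | hx
  · refine tendsto_const_nhds.congr fun n => ?_
    rw [hingeApproxSeq, hingeApprox_of_nonpos (by positivity) _ le_rfl, sub_self]
  refine tendsto_order.2 ⟨fun a ha => ?_, fun b hb => ?_⟩
  · have hcont : ContinuousAt φ x :=
      (hc.continuousOn_interior.mono (by simp)).continuousAt (Ioi_mem_nhds hx)
    have hnear : ∀ᶠ y in 𝓝 x, a + φ 0 < φ y :=
      hcont.eventually (eventually_gt_nhds (lt_sub_iff_add_lt.1 ha))
    obtain ⟨y, hay, hy, hyx⟩ :=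
      ((hnear.filter_mono nhdsWithin_le_nhds).and (Ioo_mem_nhdsLT hx)).exists
    filter_upwards [eventually_sub_le_hingeApproxSeq hm hc hy.le hyx] with n hn
    linarith
  · exact Eventually.of_forall fun n => (hingeApprox_le hm hc (by positivity) _ hx.le).trans_lt hb

end HingeApproximation

section TailComparison

variable {X : Type*} [MeasurableSpace X] {μ : Measure X} {φ : ℝ → ℝ}

theorem lintegral_ofReal_hingeApprox (hm : MonotoneOn φ (Ici 0)) (hc : ConvexOn ℝ (Ici 0) φ)
    {δ : ℝ} (hδ : 0 < δ) (N : ℕ) {u : X → ℝ} (hu : AEMeasurable u μ) :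
    ∫⁻ x, ENNReal.ofReal (hingeApprox φ δ N (u x)) ∂μ
      = ∑ i ∈ Finset.range N, ENNReal.ofReal (slopeIncrement φ δ i) *
          ∫⁻ x, ENNReal.ofReal (max (u x - (i + 1) * δ) 0) ∂μ := by
  have ha := slopeIncrement_nonneg hm hc hδ
  simp_rw [hingeApprox,
    ENNReal.ofReal_sum_of_nonneg fun i _ => mul_nonneg (ha i) (le_max_right _ _),
    ENNReal.ofReal_mul (ha _)]
  rw [lintegral_finsetSum' _ fun i _ => by fun_prop]
  exact Finset.sum_congr rfl fun i _ => lintegral_const_mul' _ _ ENNReal.ofReal_ne_top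

theorem lintegral_ofReal_comp_le_of_lintegral_max_sub_le (hm : MonotoneOn φ (Ici 0))
    (hc : ConvexOn ℝ (Ici 0) φ) (hz : φ 0 = 0) {f g : X → ℝ} (hf : AEMeasurable f μ)
    (hg : AEMeasurable g μ) (hg0 : 0 ≤ᵐ[μ] g)
    (htail : ∀ t, 0 < t → ∫⁻ x, ENNReal.ofReal (max (g x - t) 0) ∂μ
      ≤ ∫⁻ x, ENNReal.ofReal (max (f x - t) 0) ∂μ) :
    ∫⁻ x, ENNReal.ofReal (φ (g x)) ∂μ ≤ ∫⁻ x, ENNReal.ofReal (φ (f x)) ∂μ := by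
  have hδ (n : ℕ) : (0 : ℝ) < 1 / (n + 1) := by positivity
  have hseq_le (n : ℕ) (y : ℝ) : ENNReal.ofReal (hingeApproxSeq φ n y) ≤ ENNReal.ofReal (φ y) := by
    rcases le_total y 0 with hy | hy
    · rw [hingeApproxSeq, hingeApprox_of_nonpos (hδ n).le _ hy, ENNReal.ofReal_zero]
      exact zero_le
    · refine ENNReal.ofReal_le_ofReal ((hingeApprox_le hm hc (hδ n) _ hy).trans_eq ?_)
      rw [hz, sub_zero]
  have hseq_mono (n : ℕ) :
      ∫⁻ x, ENNReal.ofReal (hingeApproxSeq φ n (g x)) ∂μ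
        ≤ ∫⁻ x, ENNReal.ofReal (hingeApproxSeq φ n (f x)) ∂μ := by
    rw [hingeApproxSeq, lintegral_ofReal_hingeApprox hm hc (hδ n) _ hg,
      lintegral_ofReal_hingeApprox hm hc (hδ n) _ hf]
    exact Finset.sum_le_sum fun i _ => mul_le_mul_right (htail _ (by positivity)) _
  calc ∫⁻ x, ENNReal.ofReal (φ (g x)) ∂μ
      = ∫⁻ x, liminf (fun n => ENNReal.ofReal (hingeApproxSeq φ n (g x))) atTop ∂μ := by
        refine lintegral_congr_ae ?_
        filter_upwards [hg0] with x hx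
        have h := (ENNReal.tendsto_ofReal (tendsto_hingeApproxSeq hm hc hx)).liminf_eq
        rw [hz, sub_zero] at h
        exact h.symm
    _ ≤ liminf (fun n => ∫⁻ x, ENNReal.ofReal (hingeApproxSeq φ n (g x)) ∂μ) atTop :=
        lintegral_liminf_le' fun n => ((continuous_hingeApprox _ _ _).measurable.comp_aemeasurable
          hg).ennreal_ofReal
    _ ≤ liminf (fun _ => ∫⁻ x, ENNReal.ofReal (φ (f x)) ∂μ) atTop :=
        liminf_le_liminf (Eventually.of_forall fun n =>
          (hseq_mono n).trans (lintegral_mono (hseq_le n <| f ·)))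
    _ = ∫⁻ x, ENNReal.ofReal (φ (f x)) ∂μ := liminf_const _

end TailComparison

theorem lipschitzWith_max_sub_zero (t : ℝ) : LipschitzWith 1 fun x : ℝ => max (x - t) 0 := by
  simpa using (LipschitzWith.id.sub (LipschitzWith.const t)).max_const 0

namespace MeasureTheory.Lp

variable {X E : Type*} [MeasurableSpace X] {μ : Measure X} [NormedAddCommGroup E]

theorem mem_closure_setOf_ae_eq_indicator {p : ENNReal} [Fact (1 ≤ p)] (hp : p ≠ ⊤)
    (u : Lp E p μ) :
    u ∈ closure {v : Lp E p μ | ∃ s, MeasurableSet s ∧ μ s < ⊤ ∧ v =ᵐ[μ] s.indicator u} := by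
  refine EMetric.mem_closure_iff.2 fun ε hε => ?_
  obtain ⟨s, hs, hμs, hsε⟩ := (Lp.memLp u).exists_eLpNorm_indicator_compl_lt hp hε.ne'
  have hsu : MemLp (s.indicator u) p μ := (Lp.memLp u).indicator hs
  refine ⟨hsu.toLp _, ⟨s, hs, hμs, hsu.coeFn_toLp⟩, ?_⟩
  rwa [Lp.edist_def, eLpNorm_congr_ae (EventuallyEq.rfl.sub hsu.coeFn_toLp), ← indicator_compl]

theorem integrable_max_sub (u : Lp ℝ 1 μ) {t : ℝ} (ht : 0 ≤ t) :
    Integrable (fun x => max ((u : X → ℝ) x - t) 0) μ :=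
  (L1.integrable_coeFn _).congr ((lipschitzWith_max_sub_zero t).coeFn_compLp (by simp [ht]) u)

theorem continuous_integral_max_sub {t : ℝ} (ht : 0 ≤ t) :
    Continuous fun u : Lp ℝ 1 μ => ∫ x, max ((u : X → ℝ) x - t) 0 ∂μ := by
  have h0 : max (0 - t) 0 = 0 := by simp [ht]
  refine (continuous_integral.comp ((lipschitzWith_max_sub_zero t).continuous_compLp h0)).congr
    fun u => integral_congr_ae ((lipschitzWith_max_sub_zero t).coeFn_compLp h0 u)

theorem measurableSet_lt_const (u : Lp ℝ 1 μ) (t : ℝ) : MeasurableSet {x | t < (u : X → ℝ) x} :=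
  measurableSet_lt measurable_const (Lp.stronglyMeasurable u).measurable

theorem integral_max_sub_eq (u : Lp ℝ 1 μ) {t : ℝ} (ht : 0 < t) :
    ∫ x, max ((u : X → ℝ) x - t) 0 ∂μ = ∫ x in {x | t < (u : X → ℝ) x}, (u : X → ℝ) x ∂μ
      - t * (μ {x | t < (u : X → ℝ) x}).toReal := by
  have hind : (fun x => max ((u : X → ℝ) x - t) 0)
      = {x | t < (u : X → ℝ) x}.indicator fun x => (u : X → ℝ) x - t := by
    ext x
    by_cases hx : t < (u : X → ℝ) x
    · simp [hx, hx.le]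
    · simp [hx, not_lt.1 hx]
  rw [hind, integral_indicator (measurableSet_lt_const u t),
    integral_sub (L1.integrable_coeFn _).integrableOn
      (integrableOn_const (C := t) ((L1.integrable_coeFn u).measure_gt_lt_top ht).ne),
    setIntegral_const, smul_eq_mul, mul_comm, Measure.real]

end MeasureTheory.Lp

namespace IsSemiDoublyStochastic

variable {X : Type*} [MeasurableSpace X] {μ : Measure X} {T : Lp ℝ 1 μ →L[ℝ] Lp ℝ 1 μ}

theorem monotone (hT : IsSemiDoublyStochastic T) : Monotone T := by
  intro u v huv
  have h : 0 ≤ T (v - u) :=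
    (Lp.coeFn_nonneg _).1 (hT.1 _ ((Lp.coeFn_nonneg _).2 (sub_nonneg.2 huv)))
  rwa [map_sub, sub_nonneg] at h

theorem setIntegral_le_of_le_smul_indicatorConstLp (hT : IsSemiDoublyStochastic T) {E B : Set X}
    (hE : MeasurableSet E) (hEfin : μ E < ⊤) (hB : MeasurableSet B) (hBfin : μ B < ⊤) {t : ℝ}
    (ht : 0 ≤ t) {u : Lp ℝ 1 μ} (hu : u ≤ t • indicatorConstLp 1 hB hBfin.ne (1 : ℝ)) :
    ∫ x in E, (T u : X → ℝ) x ∂μ ≤ t * (μ E).toReal := by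
  set χ := indicatorConstLp 1 hB hBfin.ne (1 : ℝ)
  calc ∫ x in E, (T u : X → ℝ) x ∂μ ≤ ∫ x in E, (T (t • χ) : X → ℝ) x ∂μ :=
        setIntegral_mono_ae (L1.integrable_coeFn _).integrableOn
          (L1.integrable_coeFn _).integrableOn ((Lp.coeFn_le _ _).2 (hT.monotone hu))
    _ = t * ∫ x in E, (T χ : X → ℝ) x ∂μ := by
        rw [map_smul, integral_congr_ae (ae_restrict_of_ae (Lp.coeFn_smul _ _))]
        exact integral_smul t _
    _ ≤ t * (μ E).toReal := by gcongr; exact hT.2.2 E B hE hEfin hB hBfin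

theorem setIntegral_le_of_ae_le_const (hT : IsSemiDoublyStochastic T) {E : Set X}
    (hE : MeasurableSet E) (hEfin : μ E < ⊤) {t : ℝ} (ht : 0 ≤ t) {u : Lp ℝ 1 μ}
    (hu : (u : X → ℝ) ≤ᵐ[μ] fun _ => t) :
    ∫ x in E, (T u : X → ℝ) x ∂μ ≤ t * (μ E).toReal := by
  have hclosed : IsClosed {v : Lp ℝ 1 μ | ∫ x in E, (T v : X → ℝ) x ∂μ ≤ t * (μ E).toReal} :=
    isClosed_le ((continuous_setIntegral E).comp T.continuous) continuous_const
  refine hclosed.closure_subset_iff.2 ?_ (Lp.mem_closure_setOf_ae_eq_indicator ENNReal.one_ne_top u)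
  rintro v ⟨s, hs, hμs, hv⟩
  refine hT.setIntegral_le_of_le_smul_indicatorConstLp hE hEfin hs hμs ht ((Lp.coeFn_le _ _).1 ?_)
  filter_upwards [hv, hu, Lp.coeFn_smul t (indicatorConstLp 1 hs hμs.ne (1 : ℝ)),
    indicatorConstLp_coeFn (p := 1) (hs := hs) (hμs := hμs.ne) (c := (1 : ℝ))]
    with x hvx hux hsx hχx
  rw [hvx, hsx, Pi.smul_apply, hχx]
  by_cases hxs : x ∈ s <;> simp [hxs, hux]

theorem integral_max_sub_le (hT : IsSemiDoublyStochastic T) (f : Lp ℝ 1 μ) {t : ℝ} (ht : 0 < t) :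
    ∫ x, max ((T f : X → ℝ) x - t) 0 ∂μ ≤ ∫ x, max ((f : X → ℝ) x - t) 0 ∂μ := by
  set P : Lp ℝ 1 μ := (lipschitzWith_max_sub_zero t).compLp (by simp [ht.le]) f
  have hP : (P : X → ℝ) =ᵐ[μ] fun x => max ((f : X → ℝ) x - t) 0 :=
    LipschitzWith.coeFn_compLp _ _ f
  have hQ : ((f - P : Lp ℝ 1 μ) : X → ℝ) ≤ᵐ[μ] fun _ => t := by
    filter_upwards [Lp.coeFn_sub f P, hP] with x h1 h2
    rw [h1, Pi.sub_apply, h2]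
    linarith [le_max_left ((f : X → ℝ) x - t) 0]
  set E := {x | t < (T f : X → ℝ) x}
  have hsplit : ∫ x in E, (T f : X → ℝ) x ∂μ
      = ∫ x in E, (T P : X → ℝ) x ∂μ + ∫ x in E, (T (f - P) : X → ℝ) x ∂μ := by
    rw [← integral_add (L1.integrable_coeFn _).integrableOn (L1.integrable_coeFn _).integrableOn]
    refine integral_congr_ae (ae_restrict_of_ae ?_)
    rw [show T f = T P + T (f - P) by rw [← map_add, add_sub_cancel]]
    exact Lp.coeFn_add _ _
  have hTP : ∫ x in E, (T P : X → ℝ) x ∂μ ≤ ∫ x, max ((f : X → ℝ) x - t) 0 ∂μ := by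
    have hP0 : 0 ≤ᵐ[μ] (P : X → ℝ) := hP.mono fun x hx => hx ▸ le_max_right _ _
    calc ∫ x in E, (T P : X → ℝ) x ∂μ ≤ ∫ x, (T P : X → ℝ) x ∂μ :=
          setIntegral_le_integral (L1.integrable_coeFn _) (hT.1 P hP0)
      _ = ∫ x, max ((f : X → ℝ) x - t) 0 ∂μ := (hT.2.1 P).trans (integral_congr_ae hP)
  have hTQ := hT.setIntegral_le_of_ae_le_const (Lp.measurableSet_lt_const (T f) t)
    ((L1.integrable_coeFn (T f)).measure_gt_lt_top ht) ht.le hQ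
  linarith [Lp.integral_max_sub_eq (T f) ht]

end IsSemiDoublyStochastic

theorem integral_convex_le_of_semiDoublyStochastic_approx_general
    {X : Type*} [MeasurableSpace X] (μ : Measure X)
    (f g : Lp ℝ 1 μ) (hg : 0 ≤ᵐ[μ] (g : X → ℝ))
    (S : ℕ → (Lp ℝ 1 μ →L[ℝ] Lp ℝ 1 μ)) (hS : ∀ k, IsSemiDoublyStochastic (S k))
    (hconv : Tendsto (fun k => ‖S k f - g‖) atTop (𝓝 0)) :
    (∫ x, (g : X → ℝ) x ∂μ = ∫ x, (f : X → ℝ) x ∂μ) ∧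
    ∀ φ : ℝ → ℝ, MonotoneOn φ (Set.Ici 0) → ConvexOn ℝ (Set.Ici 0) φ →
      (∀ x : ℝ, 0 ≤ x → 0 ≤ φ x) → φ 0 = 0 →
      ∫⁻ x, ENNReal.ofReal (φ ((g : X → ℝ) x)) ∂μ
        ≤ ∫⁻ x, ENNReal.ofReal (φ ((f : X → ℝ) x)) ∂μ := by
  have hlim : Tendsto (fun k => S k f) atTop (𝓝 g) := tendsto_iff_norm_sub_tendsto_zero.2 hconv
  refine ⟨?_, fun φ hm hc _ hz => ?_⟩
  · refine tendsto_nhds_unique ((continuous_integral.tendsto g).comp hlim) ?_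
    simpa only [Function.comp_def, fun k => (hS k).2.1 f] using tendsto_const_nhds
  refine lintegral_ofReal_comp_le_of_lintegral_max_sub_le hm hc hz
    (Lp.aestronglyMeasurable f).aemeasurable (Lp.aestronglyMeasurable g).aemeasurable hg
    fun t ht => ?_
  have htail : ∫ x, max ((g : X → ℝ) x - t) 0 ∂μ ≤ ∫ x, max ((f : X → ℝ) x - t) 0 ∂μ :=
    le_of_tendsto' (((Lp.continuous_integral_max_sub ht.le).tendsto g).comp hlim)
      fun k => (hS k).integral_max_sub_le f ht
  have hpos (u : Lp ℝ 1 μ) : 0 ≤ᵐ[μ] fun x => max ((u : X → ℝ) x - t) 0 :=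
    ae_of_all _ fun _ => le_max_right _ _
  rw [← ofReal_integral_eq_lintegral_ofReal (Lp.integrable_max_sub g ht.le) (hpos g),
    ← ofReal_integral_eq_lintegral_ofReal (Lp.integrable_max_sub f ht.le) (hpos f)]
  exact ENNReal.ofReal_le_ofReal htail

/-- If `f, g ∈ L¹(X,μ)` are nonnegative on a σ-finite measure space and there is a sequence
`(Sₖ)` of semi-doubly stochastic operators with `‖Sₖf − g‖₁ → 0`, then `∫ g dμ = ∫ f dμ` and
`∫ φ∘g dμ ≤ ∫ φ∘f dμ` for every increasing convex `φ : [0,∞) → [0,∞)` with `φ(0) = 0`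
(the integrals of these nonnegative functions taken in `[0,∞]`). -/
theorem integral_convex_le_of_semiDoublyStochastic_approx
    {X : Type*} [MeasurableSpace X] (μ : Measure X) [SigmaFinite μ]
    (f g : Lp ℝ 1 μ) (hf : 0 ≤ᵐ[μ] (f : X → ℝ)) (hg : 0 ≤ᵐ[μ] (g : X → ℝ))
    (S : ℕ → (Lp ℝ 1 μ →L[ℝ] Lp ℝ 1 μ)) (hS : ∀ k, IsSemiDoublyStochastic (S k))
    (hconv : Tendsto (fun k => ‖S k f - g‖) atTop (𝓝 0)) :
    (∫ x, (g : X → ℝ) x ∂μ = ∫ x, (f : X → ℝ) x ∂μ) ∧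
    ∀ φ : ℝ → ℝ, MonotoneOn φ (Set.Ici 0) → ConvexOn ℝ (Set.Ici 0) φ →
      (∀ x : ℝ, 0 ≤ x → 0 ≤ φ x) → φ 0 = 0 →
      ∫⁻ x, ENNReal.ofReal (φ ((g : X → ℝ) x)) ∂μ
        ≤ ∫⁻ x, ENNReal.ofReal (φ ((f : X → ℝ) x)) ∂μ :=
  integral_convex_le_of_semiDoublyStochastic_approx_general μ f g hg S hS hconv
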